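/- arXiv:1502.07870 — 3 statements merged into one kernel-verified Lean document; each statement's English description precedes it below -/
import Mathlib

section
/- Every feasible array y[1..n] is the prefix table of some indeterminate string. Concretely, form the graph P on vertices 1..n with an edge (h, i+h−1) for each i ∈ 2..n and each h ∈ 1..y[i]; define x[i] as the set of edges incident with i for non-isolated vertices i, and x[i] = {(i,i)} (a loop) for isolated vertices i. Then the prefix table of x equals y. -/
/-- `x[i..i+ℓ-1]` matches the prefix `x[1..ℓ]` of `x[1..n]` position-wise.  -/
def MatchPref {α : Type*} (x : ℕ → Finset α) (n i ℓ : ℕ) : Prop :=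
  i + ℓ ≤ n + 1 ∧ ∀ h, h < ℓ → ∃ a, a ∈ x (1 + h) ∧ a ∈ x (i + h)

/-- `y` is the prefix table of the (1-indexed) string `x[1..n]`:
for each `i ∈ 1..n`, `y i` is the length of the longest prefix of `x[i..n]`
matching a prefix of `x`. -/
def IsPrefixTable {α : Type*} (x : ℕ → Finset α) (n : ℕ) (y : ℕ → ℕ) : Prop :=
  ∀ i, 1 ≤ i → i ≤ n → MatchPref x n i (y i) ∧ ∀ ℓ, MatchPref x n i ℓ → ℓ ≤ y i

/-- A feasible array `y[1..n]`. -/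
def Feasible (y : ℕ → ℕ) (n : ℕ) : Prop :=
  y 1 = n ∧ ∀ i, 2 ≤ i → i ≤ n → y i ≤ n - i + 1

/-- Positive edges of the prefix graph of `y[1..n]`. -/
def posEdges (y : ℕ → ℕ) (n : ℕ) : Finset (Sym2 ℕ) :=
  (Finset.Icc 2 n).biUnion fun i => (Finset.Icc 1 (y i)).image fun h => s(h, i + h - 1)

/-- Negative edges of the prefix graph of `y[1..n]`. -/
def negEdges (y : ℕ → ℕ) (n : ℕ) : Finset (Sym2 ℕ) :=
  ((Finset.Icc 2 n).filter fun i => i + y i ≤ n).image fun i => s(1 + y i, i + y i)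

/-- The positive subgraph `P⁺` of the prefix graph of `y[1..n]`, as a simple graph. -/
def Pplus (y : ℕ → ℕ) (n : ℕ) : SimpleGraph ℕ where
  Adj a b := a ≠ b ∧ s(a, b) ∈ posEdges y n
  symm := by
    constructor
    rintro a b ⟨h1, h2⟩
    exact ⟨h1.symm, by rwa [Sym2.eq_swap]⟩
  loopless := by constructor; rintro a ⟨h1, _⟩; exact h1 rfl

/-- The string constructed from a feasible array `y[1..n]`: `x[i]` is the set of positive
edges incident with `i` if `i` is non-isolated, and the loop `{(i,i)}` otherwise. -/
def constructedString (y : ℕ → ℕ) (n : ℕ) : ℕ → Finset (Sym2 ℕ) := fun i =>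
  if ((posEdges y n).filter fun e => i ∈ e) = ∅ then {s(i, i)}
  else (posEdges y n).filter fun e => i ∈ e

/-!
Positions `u ≠ v` of the constructed string match exactly when `uv` is an edge of `P`, and for
`i ≥ 2` the pair `(1 + h, i + h)` is an edge of `P` exactly when `h < y[i]`: an edge
`(h', j + h' - 1)` determines `j` as the difference of its endpoints plus one. So `x[i..]`
matches the prefix of `x` for precisely `y[i]` positions, while position `1` matches everywhere
because every `x[i]` is nonempty.
-/

section MatchPref

variable {α : Type*} {x : ℕ → Finset α} {n ℓ : ℕ}

theorem matchPref_one_iff (hx : ∀ i, (x i).Nonempty) : MatchPref x n 1 ℓ ↔ ℓ ≤ n := by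
  refine ⟨fun h => by have := h.1; omega, fun h => ⟨by omega, fun k _ => ?_⟩⟩
  obtain ⟨a, ha⟩ := hx (1 + k)
  exact ⟨a, ha, ha⟩

end MatchPref

section PrefixGraph

variable {y : ℕ → ℕ} {n i h u v ℓ : ℕ} {a : Sym2 ℕ}

theorem mk_mem_posEdges_iff (hi : 2 ≤ i) (hin : i ≤ n) :
    s(1 + h, i + h) ∈ posEdges y n ↔ h < y i := by
  simp only [posEdges, Finset.mem_biUnion, Finset.mem_image, Finset.mem_Icc, Sym2.eq_iff]
  constructor
  · rintro ⟨j, hj, h', hh', ⟨rfl, _⟩ | ⟨rfl, _⟩⟩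
    · obtain rfl : j = i := by omega
      omega
    · omega
  · intro hh
    exact ⟨i, ⟨hi, hin⟩, 1 + h, ⟨by omega, by omega⟩, Or.inl ⟨rfl, by omega⟩⟩

theorem constructedString_nonempty : (constructedString y n i).Nonempty := by
  unfold constructedString
  split_ifs with h
  · exact Finset.singleton_nonempty _
  · exact Finset.nonempty_iff_ne_empty.2 h

theorem mem_constructedString_of_mem_posEdges (ha : a ∈ posEdges y n) (hi : i ∈ a) :
    a ∈ constructedString y n i := by
  have ha' : a ∈ (posEdges y n).filter fun e => i ∈ e := Finset.mem_filter.2 ⟨ha, hi⟩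
  unfold constructedString
  split_ifs with h
  · simp [h] at ha'
  · exact ha'

theorem mem_of_mem_constructedString (ha : a ∈ constructedString y n i) :
    i ∈ a ∧ (a ∈ posEdges y n ∨ a = s(i, i)) := by
  unfold constructedString at ha
  split_ifs at ha
  · rw [Finset.mem_singleton] at ha
    exact ⟨ha ▸ Sym2.mem_mk_left i i, Or.inr ha⟩
  · rw [Finset.mem_filter] at ha
    exact ⟨ha.2, Or.inl ha.1⟩

theorem constructedString_match_iff (huv : u ≠ v) :
    (∃ a, a ∈ constructedString y n u ∧ a ∈ constructedString y n v) ↔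
      s(u, v) ∈ posEdges y n := by
  constructor
  · rintro ⟨a, hau, hav⟩
    obtain ⟨hu, ha | rfl⟩ := mem_of_mem_constructedString hau
    · rwa [← (Sym2.mem_and_mem_iff huv).1 ⟨hu, (mem_of_mem_constructedString hav).1⟩]
    · exact absurd (Sym2.mem_iff.1 (mem_of_mem_constructedString hav).1) (by omega)
  · intro he
    exact ⟨s(u, v), mem_constructedString_of_mem_posEdges he (Sym2.mem_mk_left u v),
      mem_constructedString_of_mem_posEdges he (Sym2.mem_mk_right u v)⟩

theorem matchPref_constructedString_iff (hi : 2 ≤ i) (hin : i ≤ n) :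
    MatchPref (constructedString y n) n i ℓ ↔ i + ℓ ≤ n + 1 ∧ ℓ ≤ y i := by
  have hmatch : ∀ k, (∃ a, a ∈ constructedString y n (1 + k) ∧
      a ∈ constructedString y n (i + k)) ↔ k < y i := fun k => by
    rw [constructedString_match_iff (by omega), mk_mem_posEdges_iff hi hin]
  simp only [MatchPref, hmatch]
  refine and_congr_right fun _ => ⟨fun h => ?_, fun h k hk => by omega⟩
  by_contra! hlt
  exact (h (y i) hlt).false

end PrefixGraph

/-- Every feasible array is the prefix table of some indeterminate string; concretely,
of the string built from the incident positive edges (with loops at isolated vertices). -/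
theorem feasible_isPrefixTable_constructed (n : ℕ) (y : ℕ → ℕ) (hy : Feasible y n) :
    IsPrefixTable (constructedString y n) n y := by
  obtain ⟨hy_one, hy_le⟩ := hy
  intro i hi hin
  rcases hi.eq_or_lt with rfl | hi
  · simp only [matchPref_one_iff fun _ => constructedString_nonempty, hy_one]
    exact ⟨le_rfl, fun _ => id⟩
  · have hy_i := hy_le i hi hin
    simp only [matchPref_constructedString_iff hi hin]
    exact ⟨⟨by omega, le_rfl⟩, fun _ => And.right⟩
end

section
/- If y is the prefix table of an indeterminate string x and (h,k) is a positive edge of the prefix graph of y, then x[h] ∩ x[k] ≠ ∅; if (p,q) is a negative edge, then x[p] ∩ x[q] = ∅. -/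
namespace MatchPref

variable {α : Type*} {x : ℕ → Finset α} {n i ℓ : ℕ}

theorem exists_mem_of_le (hm : MatchPref x n i ℓ) {h : ℕ} (h1 : 1 ≤ h) (hh : h ≤ ℓ) :
    ∃ a, a ∈ x h ∧ a ∈ x (i + h - 1) := by
  have := hm.2 (h - 1) (by omega)
  rwa [show 1 + (h - 1) = h by omega, show i + (h - 1) = i + h - 1 by omega] at this

theorem succ (hm : MatchPref x n i ℓ) (hle : i + ℓ ≤ n)
    (hx : ∃ a, a ∈ x (1 + ℓ) ∧ a ∈ x (i + ℓ)) : MatchPref x n i (ℓ + 1) := by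
  refine ⟨by omega, fun h hh => ?_⟩
  rcases Nat.lt_or_ge h ℓ with hlt | hge
  · exact hm.2 h hlt
  · rwa [show h = ℓ by omega]

end MatchPref

theorem IsPrefixTable.not_exists_mem {α : Type*} {x : ℕ → Finset α} {n : ℕ} {y : ℕ → ℕ}
    (hpt : IsPrefixTable x n y) {i : ℕ} (hi : 1 ≤ i) (hin : i + y i ≤ n) :
    ¬ ∃ a, a ∈ x (1 + y i) ∧ a ∈ x (i + y i) := fun hx => by
  obtain ⟨hm, hmax⟩ := hpt i hi (by omega)
  have := hmax _ (hm.succ hin hx)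
  omega

theorem posEdges_match_negEdges_mismatch_general {α : Type*} (n : ℕ) (x : ℕ → Finset α)
    (y : ℕ → ℕ)
    (hpt : IsPrefixTable x n y) :
    (∀ i h, 2 ≤ i → i ≤ n → 1 ≤ h → h ≤ y i →
      ∃ a, a ∈ x h ∧ a ∈ x (i + h - 1)) ∧
    (∀ i, 2 ≤ i → i ≤ n → i + y i ≤ n →
      ¬ ∃ a, a ∈ x (1 + y i) ∧ a ∈ x (i + y i)) :=
  ⟨fun i _ h2 hin h1 hh => (hpt i (by omega) hin).1.exists_mem_of_le h1 hh,
    fun i h2 _ hle => hpt.not_exists_mem (by omega) hle⟩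

/-- If `y` is the prefix table of `x`, then the letters at the endpoints of any positive
edge intersect, while the letters at the endpoints of any negative edge are disjoint. -/
theorem posEdges_match_negEdges_mismatch {α : Type*} (n : ℕ) (x : ℕ → Finset α)
    (y : ℕ → ℕ) (hne : ∀ i, 1 ≤ i → i ≤ n → (x i).Nonempty)
    (hpt : IsPrefixTable x n y) :
    (∀ i h, 2 ≤ i → i ≤ n → 1 ≤ h → h ≤ y i →
      ∃ a, a ∈ x h ∧ a ∈ x (i + h - 1)) ∧
    (∀ i, 2 ≤ i → i ≤ n → i + y i ≤ n →
      ¬ ∃ a, a ∈ x (1 + y i) ∧ a ∈ x (i + y i)) :=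
  posEdges_match_negEdges_mismatch_general n x y hpt
end

section
/- Suppose the prefix graph of a feasible array y contains a 'triangle' i₁, j, i₂ with (i₁,j) ∈ E⁺, (i₂,j) ∈ E⁺, and (i₁,i₂) ∈ E⁻. Then no regular string has prefix table y; i.e., any string x with π_x = y must be indeterminate (some x[i] has at least two elements). -/
/-!
A positive edge `(h, i + h - 1)` records that the match of length `y i` at position `i` pairs
`x h` with `x (i + h - 1)`, so the two letters intersect. A negative edge `(1 + y i, i + y i)`
records the mismatch that ends that match: were the two letters to intersect, the match would
extend, contradicting the maximality of `y i`. In a triangle, the letter `x j` meets both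
`x i₁` and `x i₂`, which are disjoint, so `x j` has at least two elements.
-/

theorem MatchPref.succ_s14 {α : Type*} {x : ℕ → Finset α} {n i ℓ : ℕ} (hm : MatchPref x n i ℓ)
    (hle : i + ℓ ≤ n) (hmeet : ¬Disjoint (x (1 + ℓ)) (x (i + ℓ))) :
    MatchPref x n i (ℓ + 1) := by
  refine ⟨by omega, fun h hh => ?_⟩
  rcases Nat.lt_succ_iff_lt_or_eq.mp hh with hlt | rfl
  · exact hm.2 h hlt
  · exact Finset.not_disjoint_iff.mp hmeet

namespace IsPrefixTable

variable {α : Type*} {x : ℕ → Finset α} {n : ℕ} {y : ℕ → ℕ}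

theorem mem_Icc_of_mem_posEdges (hx : IsPrefixTable x n y) {a b : ℕ}
    (hab : s(a, b) ∈ posEdges y n) : b ∈ Finset.Icc 1 n := by
  simp only [posEdges, Finset.mem_biUnion, Finset.mem_image, Finset.mem_Icc] at hab ⊢
  obtain ⟨i, ⟨hi, hin⟩, h, ⟨hh, hhy⟩, heq⟩ := hab
  have hlen := (hx i (by omega) hin).1.1
  rcases Sym2.eq_iff.mp heq with ⟨-, rfl⟩ | ⟨rfl, -⟩ <;> omega

theorem not_disjoint_of_mem_posEdges (hx : IsPrefixTable x n y) {a b : ℕ}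
    (hab : s(a, b) ∈ posEdges y n) : ¬Disjoint (x a) (x b) := by
  simp only [posEdges, Finset.mem_biUnion, Finset.mem_image, Finset.mem_Icc] at hab
  obtain ⟨i, ⟨hi, hin⟩, h, ⟨hh, hhy⟩, heq⟩ := hab
  obtain ⟨c, hc₁, hc₂⟩ := (hx i (by omega) hin).1.2 (h - 1) (by omega)
  rw [show 1 + (h - 1) = h by omega] at hc₁
  rw [show i + (h - 1) = i + h - 1 by omega] at hc₂
  rw [Finset.not_disjoint_iff]
  rcases Sym2.eq_iff.mp heq with ⟨rfl, rfl⟩ | ⟨rfl, rfl⟩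
  · exact ⟨c, hc₁, hc₂⟩
  · exact ⟨c, hc₂, hc₁⟩

theorem disjoint_of_mem_negEdges (hx : IsPrefixTable x n y) {a b : ℕ}
    (hab : s(a, b) ∈ negEdges y n) : Disjoint (x a) (x b) := by
  simp only [negEdges, Finset.mem_image, Finset.mem_filter, Finset.mem_Icc] at hab
  obtain ⟨i, ⟨⟨hi, hin⟩, hle⟩, heq⟩ := hab
  have hmax := hx i (by omega) hin
  by_contra hmeet
  have hmeet' : ¬Disjoint (x (1 + y i)) (x (i + y i)) := by
    rcases Sym2.eq_iff.mp heq with ⟨rfl, rfl⟩ | ⟨rfl, rfl⟩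
    · exact hmeet
    · exact fun hd => hmeet hd.symm
  have := hmax.2 _ (hmax.1.succ_s14 hle hmeet')
  omega

end IsPrefixTable

theorem triangle_forces_indeterminate_general (n : ℕ) (y : ℕ → ℕ)
    (i₁ j i₂ : ℕ)
    (h1 : s(i₁, j) ∈ posEdges y n) (h2 : s(i₂, j) ∈ posEdges y n)
    (h3 : s(i₁, i₂) ∈ negEdges y n) :
    ∀ (α : Type) (x : ℕ → Finset α),
      (∀ i, 1 ≤ i → i ≤ n → (x i).Nonempty) → IsPrefixTable x n y →
      ∃ i, 1 ≤ i ∧ i ≤ n ∧ 2 ≤ (x i).card := by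
  intro α x _ hx
  by_contra! hdet
  obtain ⟨hj₁, hjn⟩ := Finset.mem_Icc.mp (hx.mem_Icc_of_mem_posEdges h1)
  obtain ⟨c, hc₁, hcj⟩ := Finset.not_disjoint_iff.mp (hx.not_disjoint_of_mem_posEdges h1)
  obtain ⟨c', hc'₂, hc'j⟩ := Finset.not_disjoint_iff.mp (hx.not_disjoint_of_mem_posEdges h2)
  have hsingle : (x j).card ≤ 1 := Nat.le_of_lt_succ (hdet j hj₁ hjn)
  obtain rfl : c = c' := Finset.card_le_one.mp hsingle c hcj c' hc'j
  exact Finset.disjoint_left.mp (hx.disjoint_of_mem_negEdges h3) hc₁ hc'₂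

/-- If the prefix graph of a feasible array `y` contains a triangle `i₁, j, i₂` with
`(i₁,j), (i₂,j) ∈ E⁺` and `(i₁,i₂) ∈ E⁻`, then every string with prefix table `y` is
indeterminate: some letter has at least two elements. -/
theorem triangle_forces_indeterminate (n : ℕ) (y : ℕ → ℕ) (hy : Feasible y n)
    (i₁ j i₂ : ℕ)
    (h1 : s(i₁, j) ∈ posEdges y n) (h2 : s(i₂, j) ∈ posEdges y n)
    (h3 : s(i₁, i₂) ∈ negEdges y n) :
    ∀ (α : Type) (x : ℕ → Finset α),
      (∀ i, 1 ≤ i → i ≤ n → (x i).Nonempty) → IsPrefixTable x n y →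
      ∃ i, 1 ≤ i ∧ i ≤ n ∧ 2 ≤ (x i).card :=
  triangle_forces_indeterminate_general n y i₁ j i₂ h1 h2 h3
end
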